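/- arXiv:2511.17510 — 3 statements merged into one kernel-verified Lean document; each statement's English description precedes it below -/
import Mathlib

section
/- Let X be a complex Banach space, ω a real number, M > 0, a ≥ max(ω,0), and let F : (a,∞) → X be infinitely differentiable with ‖F⁽ᵛ⁾(λ)‖ ≤ M·v!/(λ−ω)^{v+1} for all λ > a and all v ∈ ℕ. Then F admits an analytic extension, denoted again by F, to the open right half-plane {z ∈ ℂ : Re z > ω}, and this extension satisfies ‖F⁽ᵛ⁾(z)‖ ≤ M·v!/(Re z − ω)^{v+1} for all z with Re z > ω and all v ∈ ℕ. -/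
open MeasureTheory Set
set_option linter.unusedSectionVars false

namespace WidderExt

open Complex Filter Metric Topology

variable {X : Type*} [NormedAddCommGroup X] [NormedSpace ℂ X] [CompleteSpace X]

lemma iteratedDeriv_add_apply {𝕜 : Type*} [NontriviallyNormedField 𝕜] {E : Type*}
    [NormedAddCommGroup E] [NormedSpace 𝕜 E] (u v : ℕ) (F : 𝕜 → E) :
    iteratedDeriv u (iteratedDeriv v F) = iteratedDeriv (u + v) F := by
  induction v generalizing F with
  | zero => simp
  | succ v ih =>
    rw [iteratedDeriv_succ', ih (deriv F), show u + (v + 1) = (u + v) + 1 by omega,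
      iteratedDeriv_succ']

lemma hasDerivAt_comp_ofReal {e : ℂ → X} {e' : X} {x : ℝ} (h : HasDerivAt e e' (x : ℂ)) :
    HasDerivAt (fun t : ℝ => e (t : ℂ)) e' x := by
  have h2 := (h.hasFDerivAt.restrictScalars ℝ).comp x Complex.ofRealCLM.hasFDerivAt
  have h3 := h2.hasDerivAt
  simpa [Function.comp_def] using h3

/-- coefficients of the Taylor series -/
noncomputable def tcoef (F : ℝ → X) (v : ℕ) (c : ℝ) (k : ℕ) : X :=
  ((k.factorial : ℝ))⁻¹ • iteratedDeriv (v + k) F c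

/-- the local extension: Taylor series of `iteratedDeriv v F` around center `c` -/
noncomputable def gfun (F : ℝ → X) (v : ℕ) (c : ℝ) (z : ℂ) : X :=
  ∑' k : ℕ, (z - (c : ℂ)) ^ k • tcoef F v c k

noncomputable def pser (F : ℝ → X) (v : ℕ) (c : ℝ) : FormalMultilinearSeries ℂ ℂ X :=
  fun k => ContinuousMultilinearMap.mkPiRing ℂ (Fin k) (tcoef F v c k)

lemma pser_apply (F : ℝ → X) (v : ℕ) (c : ℝ) (k : ℕ) (y : ℂ) :
    (pser F v c k) (fun _ => y) = y ^ k • tcoef F v c k := by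
  simp [pser, ContinuousMultilinearMap.mkPiRing_apply]

lemma norm_pser (F : ℝ → X) (v : ℕ) (c : ℝ) (k : ℕ) :
    ‖pser F v c k‖ = ‖tcoef F v c k‖ :=
  ContinuousMultilinearMap.norm_mkPiRing _


section Bounds

variable {ω M a : ℝ} {F : ℝ → X}

/-- termwise norm bound -/
lemma norm_term_le (hω : ω ≤ a)
    (hb : ∀ (v : ℕ) (l : ℝ), a < l →
      ‖iteratedDeriv v F l‖ ≤ M * (Nat.factorial v : ℝ) / (l - ω) ^ (v + 1))
    (v : ℕ) {c : ℝ} (hc : a < c) (k : ℕ) (z : ℂ) :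
    ‖(z - (c : ℂ)) ^ k • tcoef F v c k‖ ≤
      (M * (Nat.factorial v : ℝ) / (c - ω) ^ (v + 1)) *
        (((k + v).choose v : ℝ) * (‖z - (c : ℂ)‖ / (c - ω)) ^ k) := by
  have hcω : (0:ℝ) < c - ω := by linarith
  have h1 : ‖(z - (c : ℂ)) ^ k • tcoef F v c k‖
      = ‖z - (c:ℂ)‖ ^ k * (((k.factorial : ℝ))⁻¹ * ‖iteratedDeriv (v + k) F c‖) := by
    rw [norm_smul, norm_pow, tcoef, norm_smul, norm_inv, Real.norm_natCast]
  rw [h1]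
  have h2 : ‖iteratedDeriv (v + k) F c‖ ≤ M * ((v + k).factorial : ℝ) / (c - ω) ^ (v + k + 1) :=
    hb (v + k) c hc
  have hfac : ((v + k).factorial : ℝ)
      = ((k + v).choose v : ℝ) * (v.factorial : ℝ) * (k.factorial : ℝ) := by
    have := Nat.choose_mul_factorial_mul_factorial (Nat.le_add_left v k)
    rw [Nat.add_sub_cancel] at this
    rw [show v + k = k + v by omega, ← this]
    push_cast
    ring
  have hk : (0:ℝ) < (k.factorial : ℝ) := by positivity
  have hnn : (0:ℝ) ≤ ‖z - (c:ℂ)‖ ^ k := by positivity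
  calc ‖z - (c:ℂ)‖ ^ k * (((k.factorial : ℝ))⁻¹ * ‖iteratedDeriv (v + k) F c‖)
      ≤ ‖z - (c:ℂ)‖ ^ k * (((k.factorial : ℝ))⁻¹ *
        (M * ((v + k).factorial : ℝ) / (c - ω) ^ (v + k + 1))) := by
        apply mul_le_mul_of_nonneg_left _ hnn
        exact mul_le_mul_of_nonneg_left h2 (by positivity)
    _ = (M * (Nat.factorial v : ℝ) / (c - ω) ^ (v + 1)) *
        (((k + v).choose v : ℝ) * (‖z - (c : ℂ)‖ / (c - ω)) ^ k) := by
        have hp : (c - ω) ^ (v + k + 1) = (c - ω) ^ (v + 1) * (c - ω) ^ k := by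
          rw [← pow_add]; congr 1; omega
        rw [hfac, hp, div_pow]
        field_simp

lemma hasSum_choose_bound (v : ℕ) {c : ℝ} (hcω : ω < c) {d : ℝ} (hd0 : 0 ≤ d)
    (hd : d < c - ω) :
    HasSum (fun k : ℕ => (M * (Nat.factorial v : ℝ) / (c - ω) ^ (v + 1)) *
        (((k + v).choose v : ℝ) * (d / (c - ω)) ^ k))
      (M * (Nat.factorial v : ℝ) / ((c - ω) - d) ^ (v + 1)) := by
  have hcω' : (0:ℝ) < c - ω := by linarith
  have ht : ‖d / (c - ω)‖ < 1 := by
    rw [Real.norm_eq_abs, _root_.abs_of_nonneg (by positivity)]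
    rw [div_lt_one hcω']; linarith
  have h := (hasSum_choose_mul_geometric_of_norm_lt_one v ht).mul_left
    (M * (Nat.factorial v : ℝ) / (c - ω) ^ (v + 1))
  have h2 : (1:ℝ) - d / (c - ω) = ((c - ω) - d) / (c - ω) := by field_simp
  have hne1 : ((c:ℝ) - ω) ≠ 0 := by positivity
  have hne2 : ((c - ω) - d) ≠ 0 := by
    have : (0:ℝ) < (c - ω) - d := by linarith
    positivity
  have e : M * (Nat.factorial v : ℝ) / ((c - ω) - d) ^ (v + 1) = M * (Nat.factorial v : ℝ) / (c - ω) ^ (v + 1) * (1 / (1 - d / (c - ω)) ^ (v + 1)) := by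
    rw [h2, div_pow]
    field_simp
  rw [e]; exact h

lemma summable_norm_term (hω : ω ≤ a)
    (hb : ∀ (v : ℕ) (l : ℝ), a < l →
      ‖iteratedDeriv v F l‖ ≤ M * (Nat.factorial v : ℝ) / (l - ω) ^ (v + 1))
    (v : ℕ) {c : ℝ} (hc : a < c) {z : ℂ} (hz : ‖z - (c:ℂ)‖ < c - ω) :
    Summable (fun k : ℕ => ‖(z - (c : ℂ)) ^ k • tcoef F v c k‖) := by
  have hcω : ω < c := lt_of_le_of_lt hω hc
  refine Summable.of_nonneg_of_le (fun k => norm_nonneg _)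
    (fun k => norm_term_le hω hb v hc k z) ?_
  exact (hasSum_choose_bound v hcω (norm_nonneg _) hz).summable

lemma hasSum_gfun (hω : ω ≤ a)
    (hb : ∀ (v : ℕ) (l : ℝ), a < l →
      ‖iteratedDeriv v F l‖ ≤ M * (Nat.factorial v : ℝ) / (l - ω) ^ (v + 1))
    (v : ℕ) {c : ℝ} (hc : a < c) {z : ℂ} (hz : ‖z - (c:ℂ)‖ < c - ω) :
    HasSum (fun k : ℕ => (z - (c : ℂ)) ^ k • tcoef F v c k) (gfun F v c z) :=
  (Summable.of_norm (summable_norm_term hω hb v hc hz)).hasSum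

lemma norm_gfun_le (hω : ω ≤ a)
    (hb : ∀ (v : ℕ) (l : ℝ), a < l →
      ‖iteratedDeriv v F l‖ ≤ M * (Nat.factorial v : ℝ) / (l - ω) ^ (v + 1))
    (v : ℕ) {c : ℝ} (hc : a < c) {z : ℂ} (hz : ‖z - (c:ℂ)‖ < c - ω) :
    ‖gfun F v c z‖ ≤ M * (Nat.factorial v : ℝ) / ((c - ω) - ‖z - (c:ℂ)‖) ^ (v + 1) := by
  have hcω : ω < c := lt_of_le_of_lt hω hc
  have hsum := hasSum_choose_bound (M := M) v hcω (norm_nonneg (z - (c:ℂ))) hz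
  calc ‖gfun F v c z‖ ≤ ∑' k : ℕ, ‖(z - (c : ℂ)) ^ k • tcoef F v c k‖ :=
        norm_tsum_le_tsum_norm (summable_norm_term hω hb v hc hz)
    _ ≤ ∑' k : ℕ, (M * (Nat.factorial v : ℝ) / (c - ω) ^ (v + 1)) *
        (((k + v).choose v : ℝ) * (‖z - (c : ℂ)‖ / (c - ω)) ^ k) := by
        apply Summable.tsum_le_tsum (fun k => norm_term_le hω hb v hc k z)
          (summable_norm_term hω hb v hc hz) hsum.summable
    _ = M * (Nat.factorial v : ℝ) / ((c - ω) - ‖z - (c:ℂ)‖) ^ (v + 1) := hsum.tsum_eq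

end Bounds


section Analytic

variable {ω M a : ℝ} {F : ℝ → X}

lemma hasFPowerSeriesOnBall_gfun (hω : ω ≤ a)
    (hb : ∀ (v : ℕ) (l : ℝ), a < l →
      ‖iteratedDeriv v F l‖ ≤ M * (Nat.factorial v : ℝ) / (l - ω) ^ (v + 1))
    (v : ℕ) {c : ℝ} (hc : a < c) :
    HasFPowerSeriesOnBall (gfun F v c) (pser F v c) (c : ℂ) (ENNReal.ofReal (c - ω)) := by
  have hcω : (0:ℝ) < c - ω := by linarith [lt_of_le_of_lt hω hc]
  constructor
  · -- r_le
    refine ENNReal.le_of_forall_nnreal_lt (fun ρ hρ => ?_)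
    have hρ' : (ρ : ℝ) < c - ω := by
      rw [ENNReal.ofReal] at hρ
      exact_mod_cast (Real.lt_toNNReal_iff_coe_lt.mp (by exact_mod_cast hρ))
    apply FormalMultilinearSeries.le_radius_of_summable_norm
    have hz : ‖((c : ℂ) + ρ) - (c : ℂ)‖ < c - ω := by
      simp only [add_sub_cancel_left]
      rw [Complex.norm_real]  -- ‖((ρ:ℝ):ℂ)‖ ?
      · rw [Real.norm_eq_abs, _root_.abs_of_nonneg ρ.coe_nonneg]; exact hρ'
    have hs := summable_norm_term hω hb v hc hz
    apply Summable.congr hs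
    intro k
    rw [norm_pser, add_sub_cancel_left, norm_smul, norm_pow, Complex.norm_real,
      Real.norm_eq_abs, _root_.abs_of_nonneg ρ.coe_nonneg, mul_comm]
  · -- r_pos
    exact ENNReal.ofReal_pos.2 hcω
  · -- hasSum
    intro y hy
    have hy' : ‖y‖ < c - ω := by
      rw [EMetric.mem_ball, edist_zero_right, ← ofReal_norm_eq_enorm] at hy
      exact (ENNReal.ofReal_lt_ofReal_iff hcω).1 hy
    have hz : ‖((c:ℂ) + y) - (c:ℂ)‖ < c - ω := by rwa [add_sub_cancel_left]
    have := hasSum_gfun hω hb v hc hz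
    rw [add_sub_cancel_left] at this
    simpa only [pser_apply] using this
end Analytic


section Analytic2

variable {ω M a : ℝ} {F : ℝ → X}

lemma analyticOnNhd_gfun (hω : ω ≤ a)
    (hb : ∀ (v : ℕ) (l : ℝ), a < l →
      ‖iteratedDeriv v F l‖ ≤ M * (Nat.factorial v : ℝ) / (l - ω) ^ (v + 1))
    (v : ℕ) {c : ℝ} (hc : a < c) :
    AnalyticOnNhd ℂ (gfun F v c) (Metric.ball (c : ℂ) (c - ω)) := by
  have h := (hasFPowerSeriesOnBall_gfun hω hb v hc).analyticOnNhd
  apply h.mono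
  intro z hz
  rw [Metric.mem_ball] at hz
  rw [EMetric.mem_ball, edist_dist]
  exact ENNReal.ofReal_lt_ofReal_iff_of_nonneg dist_nonneg |>.2 hz

lemma contDiffOn_iteratedDeriv (hsm : ContDiffOn ℝ (⊤ : ℕ∞) F (Ioi a)) (v : ℕ) :
    ContDiffOn ℝ (⊤ : ℕ∞) (iteratedDeriv v F) (Ioi a) := by
  induction v with
  | zero => simpa using hsm
  | succ v ih =>
    rw [iteratedDeriv_succ]
    exact ih.deriv_of_isOpen isOpen_Ioi (by simp)

lemma iteratedDerivWithin_Icc_eq (hsm : ContDiffOn ℝ (⊤ : ℕ∞) F (Ioi a)) (v k : ℕ)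
    {c x y : ℝ} (hc : a < c) (hcx : c < x) (hy : y ∈ Icc c x) :
    iteratedDerivWithin k (iteratedDeriv v F) (Icc c x) y = iteratedDeriv (k + v) F y := by
  have hfsm : ContDiffOn ℝ (⊤ : ℕ∞) (iteratedDeriv v F) (Ioi a) := contDiffOn_iteratedDeriv hsm v
  have hsub : Icc c x ⊆ Ioi a := fun t ht => lt_of_lt_of_le hc ht.1
  have huniq : UniqueDiffOn ℝ (Icc c x) := uniqueDiffOn_Icc hcx
  have hser : HasFTaylorSeriesUpToOn (k : ℕ∞) (iteratedDeriv v F)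
      (ftaylorSeriesWithin ℝ (iteratedDeriv v F) (Ioi a)) (Ioi a) :=
    (hfsm.of_le (by exact_mod_cast le_top)).ftaylorSeriesWithin isOpen_Ioi.uniqueDiffOn
  have h2 := (hser.mono hsub).eq_iteratedFDerivWithin_of_uniqueDiffOn le_rfl huniq hy
  have h3 : ftaylorSeriesWithin ℝ (iteratedDeriv v F) (Ioi a) y k
      = iteratedFDeriv ℝ k (iteratedDeriv v F) y := by
    rw [ftaylorSeriesWithin]
    exact iteratedFDerivWithin_of_isOpen k isOpen_Ioi (hsub hy)
  rw [iteratedDerivWithin_eq_iteratedFDerivWithin, ← h2, h3,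
    ← iteratedDeriv_eq_iteratedFDeriv, iteratedDeriv_add_apply]

lemma gfun_eq_F (hM : 0 < M) (hω : ω ≤ a) (hsm : ContDiffOn ℝ (⊤ : ℕ∞) F (Ioi a))
    (hb : ∀ (v : ℕ) (l : ℝ), a < l →
      ‖iteratedDeriv v F l‖ ≤ M * (Nat.factorial v : ℝ) / (l - ω) ^ (v + 1))
    (v : ℕ) {c x : ℝ} (hc : a < c) (hcx : c < x) (hx : x < 2 * c - ω) :
    gfun F v c (x : ℂ) = iteratedDeriv v F x := by
  have hωc : ω < c := lt_of_le_of_lt hω hc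
  have hcω : (0:ℝ) < c - ω := by linarith
  have hxc : (0:ℝ) < x - c := by linarith
  have hball : ‖(x : ℂ) - (c : ℂ)‖ < c - ω := by
    rw [← Complex.ofReal_sub, Complex.norm_real, Real.norm_eq_abs,
      _root_.abs_of_pos hxc]
    linarith
  set f := iteratedDeriv v F with hf
  -- partial sums converge to gfun
  have hsum := hasSum_gfun hω hb v hc hball
  have htend1 : Tendsto (fun d : ℕ => ∑ k ∈ Finset.range (d + 1),
      ((x : ℂ) - (c : ℂ)) ^ k • tcoef F v c k) atTop (𝓝 (gfun F v c (x : ℂ))) :=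
    hsum.tendsto_sum_nat.comp (tendsto_add_atTop_nat 1)
  -- partial sums are Taylor polynomials
  have hSeq : ∀ d : ℕ, (∑ k ∈ Finset.range (d + 1), ((x : ℂ) - (c : ℂ)) ^ k • tcoef F v c k)
      = taylorWithinEval f d (Icc c x) c x := by
    intro d
    rw [taylor_within_apply]
    apply Finset.sum_congr rfl
    intro k _
    rw [iteratedDerivWithin_Icc_eq hsm v k hc hcx ⟨le_rfl, le_of_lt hcx⟩]
    rw [tcoef, show v + k = k + v by omega, ← Complex.ofReal_sub, ← Complex.ofReal_pow,
      Complex.coe_smul, smul_smul, mul_comm]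
  -- remainder bound
  set t : ℝ := (x - c) / (c - ω) with hht
  have ht0 : 0 < t := by positivity
  have ht1 : t < 1 := by rw [div_lt_one hcω]; linarith
  have htn : ‖t‖ < 1 := by rw [Real.norm_eq_abs, _root_.abs_of_pos ht0]; exact ht1
  set K : ℝ := M * ((v+1).factorial : ℝ) / (c - ω) ^ (v + 1) * t with hK
  have hrem : ∀ d : ℕ, ‖f x - taylorWithinEval f d (Icc c x) c x‖
      ≤ K * (((d + (v+1)).choose (v+1) : ℝ) * t ^ d) := by
    intro d
    have hsub : Icc c x ⊆ Ioi a := fun s hs => lt_of_lt_of_le hc hs.1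
    have hCd : ∀ y ∈ Icc c x, ‖iteratedDerivWithin (d + 1) f (Icc c x) y‖
        ≤ M * (((d + 1) + v).factorial : ℝ) / (c - ω) ^ (((d+1) + v) + 1) := by
      intro y hy
      rw [iteratedDerivWithin_Icc_eq hsm v (d+1) hc hcx hy]
      refine le_trans (hb ((d+1) + v) y (hsub hy)) ?_
      have hy1 := hy.1
      gcongr
    have hbnd := taylor_mean_remainder_bound (le_of_lt hcx)
      ((contDiffOn_iteratedDeriv hsm v).mono hsub |>.of_le (by exact_mod_cast le_top))
      (right_mem_Icc.2 (le_of_lt hcx)) hCd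
    refine le_trans hbnd (le_of_eq ?_)
    -- algebra: equality of the two bounds
    have hfac : (((d + 1) + v).factorial : ℝ)
        = ((d + (v+1)).choose (v+1) : ℝ) * ((v+1).factorial : ℝ) * (d.factorial : ℝ) := by
      have h := Nat.choose_mul_factorial_mul_factorial (Nat.le_add_left (v+1) d)
      rw [Nat.add_sub_cancel] at h
      rw [show (d+1) + v = d + (v+1) by omega, ← h]
      push_cast; ring
    have hp : (c - ω) ^ (((d+1) + v) + 1) = (c - ω) ^ (v + 1) * (c - ω) ^ (d + 1) := by
      rw [← pow_add]; congr 1; omega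
    have hdf : ((d.factorial : ℝ)) ≠ 0 := by positivity
    have hcd : ((c:ℝ) - ω) ≠ 0 := ne_of_gt hcω
    rw [hfac, hp, hK, hht, div_pow]
    field_simp
    ring
  have htend2 : Tendsto (fun d : ℕ => taylorWithinEval f d (Icc c x) c x) atTop (𝓝 (f x)) := by
    have hz : Tendsto (fun d : ℕ => K * (((d + (v+1)).choose (v+1) : ℝ) * t ^ d)) atTop (𝓝 0) := by
      have hsummable : Summable (fun d : ℕ => (((d + (v+1)).choose (v+1) : ℝ)) * t ^ d) :=
        summable_choose_mul_geometric_of_norm_lt_one (v+1) htn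
      have := hsummable.tendsto_atTop_zero
      simpa using this.const_mul K
    have hsq := squeeze_zero_norm hrem hz
    have hs2 : Tendsto (fun d : ℕ => f x - (f x - taylorWithinEval f d (Icc c x) c x))
        atTop (𝓝 (f x - 0)) := tendsto_const_nhds.sub hsq
    simpa using hs2
  have := tendsto_nhds_unique (htend1.congr (fun d => hSeq d)) htend2
  exact this

end Analytic2


section Patch

variable {ω M a : ℝ} {F : ℝ → X}

lemma norm_center_mono {z : ℂ} {c₁ c₂ : ℝ} (h : c₁ ≤ c₂) (hz : ‖z - (c₁:ℂ)‖ < c₁ - ω) :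
    ‖z - (c₂:ℂ)‖ < c₂ - ω := by
  have h1 : ‖z - (c₂:ℂ)‖ ≤ ‖z - (c₁:ℂ)‖ + ‖((c₁:ℂ) - (c₂:ℂ))‖ := by
    have : z - (c₂:ℂ) = (z - (c₁:ℂ)) + ((c₁:ℂ) - (c₂:ℂ)) := by ring
    rw [this]; exact norm_add_le _ _
  have h2 : ‖((c₁:ℂ) - (c₂:ℂ))‖ = c₂ - c₁ := by
    rw [← Complex.ofReal_sub, Complex.norm_real, Real.norm_eq_abs, abs_sub_comm,
      _root_.abs_of_nonneg (by linarith)]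
  linarith

lemma real_mem_ball {c x : ℝ} (h1 : c < x) (h2 : x < 2 * c - ω) :
    (x : ℂ) ∈ Metric.ball (c : ℂ) (c - ω) := by
  rw [Metric.mem_ball, dist_eq_norm, ← Complex.ofReal_sub, Complex.norm_real,
    Real.norm_eq_abs, _root_.abs_of_pos (by linarith : (0:ℝ) < x - c)]
  linarith

lemma mem_ball_iff_norm'' {c : ℝ} {z : ℂ} :
    z ∈ Metric.ball (c : ℂ) (c - ω) ↔ ‖z - (c:ℂ)‖ < c - ω := by
  rw [Metric.mem_ball, dist_eq_norm]

/-- identity theorem between overlapping centers -/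
lemma eqOn_pair (hM : 0 < M) (hω : ω ≤ a) (hsm : ContDiffOn ℝ (⊤ : ℕ∞) F (Ioi a))
    (hb : ∀ (v : ℕ) (l : ℝ), a < l →
      ‖iteratedDeriv v F l‖ ≤ M * (Nat.factorial v : ℝ) / (l - ω) ^ (v + 1))
    (v : ℕ) {c₁ c₂ : ℝ} (hc₁ : a < c₁) (h12 : c₁ ≤ c₂) (hover : c₂ < 2 * c₁ - ω) :
    EqOn (gfun F v c₁) (gfun F v c₂) (Metric.ball (c₁ : ℂ) (c₁ - ω)) := by
  have hc₂ : a < c₂ := lt_of_lt_of_le hc₁ h12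
  have hωc : ω < c₁ := lt_of_le_of_lt hω hc₁
  set x₀ : ℝ := (c₂ + (2 * c₁ - ω)) / 2 with hx₀
  set d : ℝ := (2 * c₁ - ω - c₂) / 4 with hd
  have hd0 : 0 < d := by rw [hd]; linarith
  have hx₀1 : c₂ < x₀ := by rw [hx₀]; linarith
  have hx₀2 : x₀ + d < 2 * c₁ - ω := by rw [hx₀, hd]; linarith
  set u : ℕ → ℝ := fun k => x₀ + d / (k + 2) with hu
  have hu_mem : ∀ k : ℕ, c₂ < u k ∧ u k < 2 * c₁ - ω := by
    intro k
    have hk2 : (0:ℝ) < (k:ℝ) + 2 := by positivity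
    have h1 : 0 < d / ((k:ℝ) + 2) := by positivity
    have h2 : d / ((k:ℝ) + 2) ≤ d / 2 := by
      have hk : (0:ℝ) ≤ (k:ℝ) := Nat.cast_nonneg k
      gcongr
      linarith
    constructor
    · rw [hu]; dsimp; linarith
    · rw [hu]; dsimp; nlinarith [h2]
  apply AnalyticOnNhd.eqOn_of_preconnected_of_frequently_eq
    (analyticOnNhd_gfun hω hb v hc₁)
    ((analyticOnNhd_gfun hω hb v hc₂).mono ?ball_sub)
    ((convex_ball _ _).isPreconnected)
    (z₀ := ((x₀ : ℝ) : ℂ)) ?z₀mem ?freq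
  case ball_sub =>
    intro z hz
    rw [mem_ball_iff_norm''] at hz ⊢
    exact norm_center_mono h12 hz
  case z₀mem =>
    exact real_mem_ball (by linarith) (by linarith)
  case freq =>
    have h0 : Tendsto (fun k : ℕ => d / ((k:ℝ) + 2)) atTop (𝓝 0) := by
      have h := (tendsto_const_div_atTop_nhds_zero_nat d).comp (tendsto_add_atTop_nat 2)
      apply h.congr
      intro k
      simp [Function.comp]
    have hu_t : Tendsto u atTop (𝓝 x₀) := by
      have := h0.const_add x₀
      simpa using this
    have huC : Tendsto (fun k => ((u k : ℝ) : ℂ)) atTop (𝓝[≠] ((x₀:ℝ):ℂ)) := by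
      apply tendsto_nhdsWithin_of_tendsto_nhds_of_eventually_within
      · exact (Complex.continuous_ofReal.tendsto x₀).comp hu_t
      · apply Eventually.of_forall
        intro k
        have : x₀ < u k := by
          rw [hu]; dsimp
          have : (0:ℝ) < d / ((k:ℝ)+2) := by positivity
          linarith
        simp only [mem_compl_iff, mem_singleton_iff]
        intro hcon
        rw [Complex.ofReal_inj] at hcon
        linarith
    apply huC.frequently
    apply Frequently.of_forall
    intro k
    have h1 := (hu_mem k).1
    have h2 := (hu_mem k).2
    rw [gfun_eq_F hM hω hsm hb v hc₁ (by linarith) h2,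
      gfun_eq_F hM hω hsm hb v hc₂ h1 (by linarith)]

/-- chained identity: any two centers, smaller ball -/
lemma eqOn_le (hM : 0 < M) (hω : ω ≤ a) (hsm : ContDiffOn ℝ (⊤ : ℕ∞) F (Ioi a))
    (hb : ∀ (v : ℕ) (l : ℝ), a < l →
      ‖iteratedDeriv v F l‖ ≤ M * (Nat.factorial v : ℝ) / (l - ω) ^ (v + 1))
    (v : ℕ) {c₁ c₂ : ℝ} (hc₁ : a < c₁) (h12 : c₁ ≤ c₂) :
    EqOn (gfun F v c₁) (gfun F v c₂) (Metric.ball (c₁ : ℂ) (c₁ - ω)) := by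
  have hωc : ω < c₁ := lt_of_le_of_lt hω hc₁
  obtain ⟨E, hE⟩ : ∃ E : ℕ → ℝ, ∀ k, E k = ω + (c₁ - ω) * (3/2 : ℝ) ^ k :=
    ⟨fun k => ω + (c₁ - ω) * (3/2 : ℝ) ^ k, fun _ => rfl⟩
  have hE0 : E 0 = c₁ := by rw [hE 0]; norm_num
  have hEc : ∀ k, c₁ ≤ E k := by
    intro k
    rw [hE k]
    nlinarith [one_le_pow₀ (by norm_num : (1:ℝ) ≤ 3/2) (n := k),
      sub_pos.2 hωc]
  have hEa : ∀ k, a < E k := fun k => lt_of_lt_of_le hc₁ (hEc k)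
  have hEmono : ∀ k, E k ≤ E (k+1) := by
    intro k
    rw [hE k, hE (k+1)]
    have h1 : (3/2:ℝ) ^ k ≤ (3/2:ℝ) ^ (k+1) := by
      apply pow_le_pow_right₀ (by norm_num)
      omega
    nlinarith [sub_pos.2 hωc]
  have hEover : ∀ k, E (k+1) < 2 * E k - ω := by
    intro k
    rw [hE k, hE (k+1), pow_succ]
    have h1 : (0:ℝ) < (3/2:ℝ)^k := by positivity
    nlinarith [sub_pos.2 hωc]
  have key : ∀ k, EqOn (gfun F v c₁) (gfun F v (E k)) (Metric.ball (c₁ : ℂ) (c₁ - ω)) := by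
    intro k
    induction k with
    | zero => rw [hE0]; exact fun z _ => rfl
    | succ k ih =>
      intro z hz
      rw [ih hz]
      have hsub : Metric.ball ((c₁:ℝ) : ℂ) (c₁ - ω) ⊆ Metric.ball ((E k : ℝ) : ℂ) (E k - ω) := by
        intro w hw
        rw [mem_ball_iff_norm''] at hw ⊢
        exact norm_center_mono (hEc k) hw
      exact eqOn_pair hM hω hsm hb v (hEa k) (hEmono k) (hEover k) (hsub hz)
  -- find k with c₂ ≤ E k
  have hex : ∃ k, c₂ ≤ E k := by
    obtain ⟨n, hn⟩ := pow_unbounded_of_one_lt ((c₂ - ω) / (c₁ - ω)) (by norm_num : (1:ℝ) < 3/2)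
    refine ⟨n, ?_⟩
    rw [div_lt_iff₀ (by linarith : (0:ℝ) < c₁ - ω)] at hn
    rw [hE n]
    linarith
  classical
  obtain ⟨k₀, hfind, hmin⟩ : ∃ k : ℕ, c₂ ≤ E k ∧ ∀ j < k, ¬ c₂ ≤ E j :=
    ⟨Nat.find hex, Nat.find_spec hex, fun j hj => Nat.find_min hex hj⟩
  cases k₀ with
  | zero =>
    have hle : c₂ ≤ c₁ := by rw [← hE0]; exact hfind
    have hcc : c₁ = c₂ := le_antisymm h12 hle
    rw [← hcc]
    exact fun z _ => rfl
  | succ j =>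
    have hfind' : c₂ ≤ E (j+1) := hfind
    have hj : ¬ (c₂ ≤ E j) := hmin j (by omega)
    push_neg at hj
    have hc₂a : a < c₂ := lt_of_lt_of_le hc₁ h12
    have hover2 : E (j+1) < 2 * c₂ - ω := by
      have h1 : E (j+1) - ω = (3/2) * (E j - ω) := by
        rw [hE j, hE (j+1), pow_succ]; ring
      have h2 : E j - ω < c₂ - ω := by linarith
      have h3 : (0:ℝ) < c₂ - ω := by
        have := lt_of_le_of_lt hω hc₂a; linarith
      linarith
    have p1 := key (j+1)
    have p2 := eqOn_pair hM hω hsm hb v hc₂a hfind' hover2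
    intro z hz
    rw [p1 hz, p2 ?_]
    rw [mem_ball_iff_norm''] at hz ⊢
    exact norm_center_mono h12 hz

end Patch

section Glue

variable {ω M a : ℝ} {F : ℝ → X}

lemma exists_center (hω : ω ≤ a) {z : ℂ} (hz : ω < z.re) :
    ∃ c : ℝ, a < c ∧ ‖z - (c : ℂ)‖ < c - ω := by
  set c : ℝ := max (a + 1) (z.re + z.im ^ 2 / (z.re - ω) + 1) with hc
  have hre : (0:ℝ) < z.re - ω := by linarith
  have hca : a < c := lt_of_lt_of_le (by linarith) (le_max_left _ _)
  have hcz : z.re + z.im ^ 2 / (z.re - ω) + 1 ≤ c := le_max_right _ _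
  have him : (0:ℝ) ≤ z.im ^ 2 / (z.re - ω) := by positivity
  have hczre : z.re + 1 ≤ c := by linarith
  have hcω : (0:ℝ) < c - ω := by linarith
  refine ⟨c, hca, ?_⟩
  have hsq : ‖z - (c:ℂ)‖ ^ 2 < (c - ω) ^ 2 := by
    have hnormsq : ‖z - (c:ℂ)‖ ^ 2 = (z.re - c) ^ 2 + z.im ^ 2 := by
      rw [Complex.sq_norm, Complex.normSq_apply]
      simp only [Complex.sub_re, Complex.sub_im, Complex.ofReal_re, Complex.ofReal_im, sub_zero]
      ring
    rw [hnormsq]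
    have key : z.im ^ 2 < (z.re - ω) * (2 * c - z.re - ω) := by
      have h1 : z.im ^ 2 / (z.re - ω) + 1 ≤ c - z.re := by linarith
      have h2 : z.im ^ 2 + (z.re - ω) ≤ (z.re - ω) * (c - z.re) := by
        have := mul_le_mul_of_nonneg_left h1 (le_of_lt hre)
        rw [mul_add, mul_div_cancel₀ _ (ne_of_gt hre)] at this
        linarith
      have h3 : (z.re - ω) * (c - z.re) ≤ (z.re - ω) * (2 * c - z.re - ω) := by
        apply mul_le_mul_of_nonneg_left _ (le_of_lt hre)
        linarith
      linarith
    nlinarith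
  have h0 : (0:ℝ) ≤ ‖z - (c:ℂ)‖ := norm_nonneg _
  nlinarith

open Classical in
/-- the global extension -/
noncomputable def Gdef (ω a : ℝ) (F : ℝ → X) : ℂ → X := fun z =>
  if h : ∃ c : ℝ, a < c ∧ ‖z - (c : ℂ)‖ < c - ω then gfun F 0 h.choose z else 0

lemma Gdef_eq_gfun (hM : 0 < M) (hω : ω ≤ a) (hsm : ContDiffOn ℝ (⊤ : ℕ∞) F (Ioi a))
    (hb : ∀ (v : ℕ) (l : ℝ), a < l →
      ‖iteratedDeriv v F l‖ ≤ M * (Nat.factorial v : ℝ) / (l - ω) ^ (v + 1))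
    {c : ℝ} (hc : a < c) :
    EqOn (Gdef ω a F) (gfun F 0 c) (Metric.ball (c : ℂ) (c - ω)) := by
  intro z hz
  rw [mem_ball_iff_norm''] at hz
  have hex : ∃ c' : ℝ, a < c' ∧ ‖z - (c' : ℂ)‖ < c' - ω := ⟨c, hc, hz⟩
  unfold Gdef
  rw [dif_pos hex]
  obtain ⟨hc'a, hc'z⟩ := hex.choose_spec
  rcases le_total c hex.choose with h | h
  · exact (eqOn_le hM hω hsm hb 0 hc h (mem_ball_iff_norm''.2 hz)).symm
  · exact eqOn_le hM hω hsm hb 0 hc'a h (mem_ball_iff_norm''.2 hc'z)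

/-- termwise derivative via the identity theorem -/
lemma deriv_gfun (hM : 0 < M) (hω : ω ≤ a) (hsm : ContDiffOn ℝ (⊤ : ℕ∞) F (Ioi a))
    (hb : ∀ (v : ℕ) (l : ℝ), a < l →
      ‖iteratedDeriv v F l‖ ≤ M * (Nat.factorial v : ℝ) / (l - ω) ^ (v + 1))
    (v : ℕ) {c : ℝ} (hc : a < c) :
    EqOn (deriv (gfun F v c)) (gfun F (v+1) c) (Metric.ball (c : ℂ) (c - ω)) := by
  have hωc : ω < c := lt_of_le_of_lt hω hc
  set x₀ : ℝ := c + (c - ω) / 2 with hx₀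
  set d : ℝ := (c - ω) / 8 with hd
  have hd0 : 0 < d := by rw [hd]; linarith
  apply AnalyticOnNhd.eqOn_of_preconnected_of_frequently_eq
    ((analyticOnNhd_gfun hω hb v hc).deriv)
    (analyticOnNhd_gfun hω hb (v+1) hc)
    ((convex_ball _ _).isPreconnected)
    (z₀ := ((x₀ : ℝ) : ℂ)) ?z₀mem ?freq
  case z₀mem =>
    exact real_mem_ball (by rw [hx₀]; linarith) (by rw [hx₀]; linarith)
  case freq =>
    set u : ℕ → ℝ := fun k => x₀ + d / (k + 2) with hu
    have hu_mem : ∀ k : ℕ, c < u k ∧ u k < 2 * c - ω := by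
      intro k
      have hk : (0:ℝ) ≤ (k:ℝ) := Nat.cast_nonneg k
      have h1 : 0 < d / ((k:ℝ) + 2) := by positivity
      have h2 : d / ((k:ℝ) + 2) ≤ d / 2 := by
        gcongr
        linarith
      constructor
      · show c < x₀ + d / ((k:ℝ) + 2)
        linarith [hx₀, hd]
      · show x₀ + d / ((k:ℝ) + 2) < 2 * c - ω
        linarith [hx₀, hd, h2]
    have h0 : Tendsto (fun k : ℕ => d / ((k:ℝ) + 2)) atTop (𝓝 0) := by
      have h := (tendsto_const_div_atTop_nhds_zero_nat d).comp (tendsto_add_atTop_nat 2)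
      apply h.congr
      intro k
      simp [Function.comp]
    have hu_t : Tendsto u atTop (𝓝 x₀) := by
      have := h0.const_add x₀
      simpa using this
    have huC : Tendsto (fun k => ((u k : ℝ) : ℂ)) atTop (𝓝[≠] ((x₀:ℝ):ℂ)) := by
      apply tendsto_nhdsWithin_of_tendsto_nhds_of_eventually_within
      · exact (Complex.continuous_ofReal.tendsto x₀).comp hu_t
      · apply Eventually.of_forall
        intro k
        have hgt : x₀ < u k := by
          rw [hu]; dsimp
          have : (0:ℝ) < d / ((k:ℝ)+2) := by positivity
          linarith
        simp only [mem_compl_iff, mem_singleton_iff]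
        intro hcon
        rw [Complex.ofReal_inj] at hcon
        linarith
    apply huC.frequently
    apply Frequently.of_forall
    intro k
    obtain ⟨hk1, hk2⟩ := hu_mem k
    have hmem : ((u k : ℝ) : ℂ) ∈ Metric.ball ((c:ℝ):ℂ) (c - ω) := real_mem_ball hk1 hk2
    -- complex derivative at a real point
    have hA : AnalyticAt ℂ (gfun F v c) ((u k : ℝ) : ℂ) := analyticOnNhd_gfun hω hb v hc _ hmem
    have hD : HasDerivAt (gfun F v c) (deriv (gfun F v c) ((u k : ℝ):ℂ)) ((u k : ℝ):ℂ) :=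
      hA.differentiableAt.hasDerivAt
    have hφ : HasDerivAt (fun t : ℝ => gfun F v c ((t : ℝ):ℂ))
        (deriv (gfun F v c) ((u k : ℝ):ℂ)) (u k) := hasDerivAt_comp_ofReal hD
    have hev : (fun t : ℝ => gfun F v c ((t : ℝ):ℂ)) =ᶠ[𝓝 (u k)] iteratedDeriv v F := by
      apply Filter.eventuallyEq_of_mem (Ioo_mem_nhds hk1 hk2)
      intro t ht
      exact gfun_eq_F hM hω hsm hb v hc ht.1 ht.2
    have hφ' : HasDerivAt (iteratedDeriv v F)
        (deriv (gfun F v c) ((u k : ℝ):ℂ)) (u k) := by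
      apply hφ.congr_of_eventuallyEq hev.symm
    have h1 : deriv (gfun F v c) ((u k : ℝ):ℂ) = iteratedDeriv (v+1) F (u k) := by
      rw [iteratedDeriv_succ]
      exact (hφ'.deriv).symm
    rw [h1, gfun_eq_F hM hω hsm hb (v+1) hc hk1 hk2]

lemma iteratedDeriv_Gdef (hM : 0 < M) (hω : ω ≤ a) (hsm : ContDiffOn ℝ (⊤ : ℕ∞) F (Ioi a))
    (hb : ∀ (v : ℕ) (l : ℝ), a < l →
      ‖iteratedDeriv v F l‖ ≤ M * (Nat.factorial v : ℝ) / (l - ω) ^ (v + 1))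
    (v : ℕ) {c : ℝ} (hc : a < c) :
    EqOn (iteratedDeriv v (Gdef ω a F)) (gfun F v c) (Metric.ball (c : ℂ) (c - ω)) := by
  induction v with
  | zero =>
    intro z hz
    rw [iteratedDeriv_zero]
    exact Gdef_eq_gfun hM hω hsm hb hc hz
  | succ v ih =>
    intro z hz
    rw [iteratedDeriv_succ]
    have hev : iteratedDeriv v (Gdef ω a F) =ᶠ[𝓝 z] gfun F v c :=
      Filter.eventuallyEq_of_mem (Metric.isOpen_ball.mem_nhds hz) ih
    rw [hev.deriv_eq]
    exact deriv_gfun hM hω hsm hb v hc hz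

end Glue

section Final

variable {ω M a : ℝ} {F : ℝ → X}

lemma norm_iteratedDeriv_Gdef_le (hM : 0 < M) (hω : ω ≤ a)
    (hsm : ContDiffOn ℝ (⊤ : ℕ∞) F (Ioi a))
    (hb : ∀ (v : ℕ) (l : ℝ), a < l →
      ‖iteratedDeriv v F l‖ ≤ M * (Nat.factorial v : ℝ) / (l - ω) ^ (v + 1))
    (v : ℕ) {z : ℂ} (hz : ω < z.re) :
    ‖iteratedDeriv v (Gdef ω a F) z‖ ≤ M * (Nat.factorial v : ℝ) / (z.re - ω) ^ (v + 1) := by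
  obtain ⟨c₀, hc₀a, hc₀z⟩ := exists_center hω hz
  set u : ℕ → ℝ := fun n => c₀ + n with hu
  have hua : ∀ n, a < u n := by
    intro n; show a < c₀ + (n:ℝ)
    have : (0:ℝ) ≤ (n:ℝ) := Nat.cast_nonneg n
    linarith
  have humem : ∀ n : ℕ, ‖z - ((u n : ℝ):ℂ)‖ < u n - ω := by
    intro n
    apply norm_center_mono _ hc₀z
    show c₀ ≤ c₀ + (n:ℝ)
    have : (0:ℝ) ≤ (n:ℝ) := Nat.cast_nonneg n
    linarith
  have heq : ∀ n : ℕ, iteratedDeriv v (Gdef ω a F) z = gfun F v (u n) z := by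
    intro n
    exact iteratedDeriv_Gdef hM hω hsm hb v (hua n) (mem_ball_iff_norm''.2 (humem n))
  have hbnd : ∀ n : ℕ, ‖iteratedDeriv v (Gdef ω a F) z‖
      ≤ M * (Nat.factorial v : ℝ) / ((u n - ω) - ‖z - ((u n : ℝ):ℂ)‖) ^ (v + 1) := by
    intro n
    rw [heq n]
    exact norm_gfun_le hω hb v (hua n) (humem n)
  -- the denominators tend to (z.re - ω)
  set f : ℕ → ℝ := fun n => (u n - ω) - ‖z - ((u n : ℝ):ℂ)‖ with hf
  have htop : Tendsto (fun n : ℕ => u n - z.re) atTop atTop := by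
    have : Tendsto (fun n : ℕ => (n:ℝ)) atTop atTop := tendsto_natCast_atTop_atTop
    have h2 := tendsto_atTop_add_const_left atTop (c₀ - z.re) this
    apply h2.congr
    intro n
    show c₀ - z.re + (n:ℝ) = u n - z.re
    simp [hu]; ring
  have hfub : ∀ n : ℕ, f n ≤ z.re - ω := by
    intro n
    have h1 : u n - z.re ≤ ‖z - ((u n : ℝ):ℂ)‖ := by
      have h2 : |(z - ((u n : ℝ):ℂ)).re| ≤ ‖z - ((u n : ℝ):ℂ)‖ := by
        exact Complex.abs_re_le_norm _
      have h3 : (z - ((u n : ℝ):ℂ)).re = z.re - u n := by simp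
      rw [h3] at h2
      calc u n - z.re ≤ |z.re - u n| := by rw [abs_sub_comm]; exact le_abs_self _
        _ ≤ _ := h2
    show (u n - ω) - ‖z - ((u n : ℝ):ℂ)‖ ≤ z.re - ω
    linarith
  have hflb : ∀ᶠ n : ℕ in atTop, (z.re - ω) - z.im ^ 2 / (u n - z.re) ≤ f n := by
    filter_upwards [htop.eventually_ge_atTop 1] with n hn
    have hpos : (0:ℝ) < u n - z.re := by linarith
    have hnrm : ‖z - ((u n : ℝ):ℂ)‖ ≤ (u n - z.re) + z.im ^ 2 / (u n - z.re) := by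
      have hrhs : (0:ℝ) ≤ (u n - z.re) + z.im ^ 2 / (u n - z.re) := by positivity
      apply le_of_pow_le_pow_left₀ (two_ne_zero) hrhs
      have hnsq : ‖z - ((u n : ℝ):ℂ)‖ ^ 2 = (z.re - u n) ^ 2 + z.im ^ 2 := by
        rw [Complex.sq_norm, Complex.normSq_apply]
        simp only [Complex.sub_re, Complex.sub_im, Complex.ofReal_re, Complex.ofReal_im, sub_zero]
        ring
      rw [hnsq]
      have hexp : ((u n - z.re) + z.im ^ 2 / (u n - z.re)) ^ 2
          = (u n - z.re)^2 + 2 * z.im^2 + (z.im^2 / (u n - z.re))^2 := by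
        have : z.im ^ 2 / (u n - z.re) * (u n - z.re) = z.im ^ 2 :=
          div_mul_cancel₀ _ (ne_of_gt hpos)
        nlinarith [this]
      rw [hexp]
      nlinarith [sq_nonneg (z.im^2 / (u n - z.re))]
    show (z.re - ω) - z.im ^ 2 / (u n - z.re) ≤ (u n - ω) - ‖z - ((u n : ℝ):ℂ)‖
    linarith
  have hftend : Tendsto f atTop (𝓝 (z.re - ω)) := by
    have hlow : Tendsto (fun n : ℕ => (z.re - ω) - z.im ^ 2 / (u n - z.re)) atTop
        (𝓝 (z.re - ω)) := by
      have hdiv : Tendsto (fun n : ℕ => z.im ^ 2 / (u n - z.re)) atTop (𝓝 0) :=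
        Tendsto.div_atTop tendsto_const_nhds htop
      have := tendsto_const_nhds (x := z.re - ω) (f := atTop (α := ℕ)) |>.sub hdiv
      simpa using this
    exact tendsto_of_tendsto_of_tendsto_of_le_of_le' hlow tendsto_const_nhds hflb
      (Eventually.of_forall hfub)
  have hzre : (0:ℝ) < z.re - ω := by linarith
  have hlim : Tendsto (fun n : ℕ => M * (Nat.factorial v : ℝ) / (f n) ^ (v + 1)) atTop
      (𝓝 (M * (Nat.factorial v : ℝ) / (z.re - ω) ^ (v + 1))) := by
    apply Tendsto.div tendsto_const_nhds (hftend.pow (v+1))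
    positivity
  exact ge_of_tendsto hlim (Eventually.of_forall hbnd)

end Final

end WidderExt

/-- If `F : (a,∞) → X` (with `a ≥ max(ω,0)`) is infinitely
differentiable and satisfies the Widder estimates with weight `(λ-ω)`, then `F`
extends analytically to the half-plane `{Re z > ω}` and the extension satisfies
the corresponding estimates there. -/
theorem stmt_3 {X : Type*} [NormedAddCommGroup X] [NormedSpace ℂ X] [CompleteSpace X]
    (ω M a : ℝ) (hM : 0 < M) (ha : max ω 0 ≤ a) (F : ℝ → X)
    (hsmooth : ContDiffOn ℝ (⊤ : ℕ∞) F (Ioi a))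
    (hbound : ∀ (v : ℕ) (l : ℝ), a < l →
      ‖iteratedDeriv v F l‖ ≤ M * (Nat.factorial v : ℝ) / (l - ω) ^ (v + 1)) :
    ∃ G : ℂ → X,
      (∀ l : ℝ, a < l → G (l : ℂ) = F l) ∧
      DifferentiableOn ℂ G {z : ℂ | ω < z.re} ∧
      (∀ (v : ℕ) (z : ℂ), ω < z.re →
        ‖iteratedDeriv v G z‖ ≤ M * (Nat.factorial v : ℝ) / (z.re - ω) ^ (v + 1)) := by
  have hω : ω ≤ a := le_trans (le_max_left _ _) ha
  refine ⟨WidderExt.Gdef ω a F, ?_, ?_, ?_⟩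
  · -- agreement with F on (a, ∞)
    intro l hl
    have hωl : ω < l := lt_of_le_of_lt hω hl
    set c : ℝ := (max a ((l + ω) / 2) + l) / 2 with hc
    have hma : a ≤ max a ((l + ω) / 2) := le_max_left _ _
    have hmω : (l + ω) / 2 ≤ max a ((l + ω) / 2) := le_max_right _ _
    have hml : max a ((l + ω) / 2) < l := by
      apply max_lt hl
      linarith
    have hac : a < c := by rw [hc]; linarith
    have hcl : c < l := by rw [hc]; linarith
    have hl2 : l < 2 * c - ω := by rw [hc]; linarith
    have h1 := WidderExt.Gdef_eq_gfun hM hω hsmooth hbound hac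
      (WidderExt.real_mem_ball hcl hl2)
    rw [h1, WidderExt.gfun_eq_F hM hω hsmooth hbound 0 hac hcl hl2, iteratedDeriv_zero]
  · -- differentiability
    intro z hz
    rw [mem_setOf_eq] at hz
    obtain ⟨c, hca, hcz⟩ := WidderExt.exists_center hω hz
    have hmem : z ∈ Metric.ball ((c:ℝ):ℂ) (c - ω) := WidderExt.mem_ball_iff_norm''.2 hcz
    have hev : WidderExt.Gdef ω a F =ᶠ[nhds z] WidderExt.gfun F 0 c :=
      Filter.eventuallyEq_of_mem (Metric.isOpen_ball.mem_nhds hmem)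
        (WidderExt.Gdef_eq_gfun hM hω hsmooth hbound hca)
    have hda : DifferentiableAt ℂ (WidderExt.gfun F 0 c) z :=
      (WidderExt.analyticOnNhd_gfun hω hbound 0 hca z hmem).differentiableAt
    exact (hev.differentiableAt_iff.2 hda).differentiableWithinAt
  · -- bounds
    intro v z hz
    exact WidderExt.norm_iteratedDeriv_Gdef_le hM hω hsmooth hbound v hz
end

section
/- Let X be a complex Banach space, ω a real number, M > 0, and let f : [0,∞) → X be locally Bochner integrable with ‖f(t)‖ ≤ M·e^{ωt} for almost every t ≥ 0. Define F(λ) := ∫₀^∞ e^{−λt} f(t) dt for λ > ω. Then F is infinitely differentiable on (ω,∞), F⁽ᵛ⁾(λ) = ∫₀^∞ e^{−λt}(−t)^v f(t) dt for λ > ω and v ∈ ℕ, and ‖F⁽ᵛ⁾(λ)‖ ≤ M·v!/(λ−ω)^{v+1} for all λ > ω and all v ∈ ℕ. -/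
open MeasureTheory Set Filter Metric

lemma aux_integrableOn_pow_mul_exp (v : ℕ) {δ : ℝ} (hδ : 0 < δ) :
    IntegrableOn (fun t : ℝ => t ^ v * Real.exp (-δ * t)) (Ioi 0) := by
  have h := integrableOn_rpow_mul_exp_neg_mul_rpow (p := 1) (s := (v : ℝ)) (b := δ)
    (lt_of_lt_of_le neg_one_lt_zero (Nat.cast_nonneg v)) one_pos hδ
  refine h.congr_fun (fun t ht => ?_) measurableSet_Ioi
  dsimp only
  rw [Real.rpow_one, Real.rpow_natCast]

lemma aux_integral_pow_mul_exp (v : ℕ) {δ : ℝ} (hδ : 0 < δ) :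
    ∫ t in Ioi (0:ℝ), t ^ v * Real.exp (-δ * t) = v.factorial / δ ^ (v + 1) := by
  calc ∫ t in Ioi (0:ℝ), t ^ v * Real.exp (-δ * t)
      = ∫ t in Ioi (0:ℝ), t ^ (((v:ℝ)+1)-1) * Real.exp (-(δ * t)) := by
        refine setIntegral_congr_fun measurableSet_Ioi fun t ht => ?_
        rw [neg_mul, show ((v:ℝ)+1-1) = (v:ℝ) by ring, Real.rpow_natCast]
    _ = (1/δ) ^ ((v:ℝ)+1) * Real.Gamma ((v:ℝ)+1) :=
        Real.integral_rpow_mul_exp_neg_mul_Ioi (by positivity) hδ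
    _ = v.factorial / δ ^ (v+1) := by
        rw [show ((v:ℝ)+1) = ((v+1:ℕ):ℝ) by push_cast; ring]
        rw [Real.rpow_natCast, show ((v+1:ℕ):ℝ) = (v:ℝ)+1 by push_cast; ring,
          Real.Gamma_nat_eq_factorial, one_div, inv_pow, inv_mul_eq_div]

/-- If `f : [0,∞) → X` is locally Bochner integrable with
`‖f(t)‖ ≤ M e^{ωt}` a.e., then its Laplace transform `F(λ) = ∫₀^∞ e^{-λt} f(t) dt`
is infinitely differentiable on `(ω,∞)`, its derivatives are given by
`F⁽ᵛ⁾(λ) = ∫₀^∞ e^{-λt}(-t)^v f(t) dt`, and the Widder estimates hold. -/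
theorem stmt_4 {X : Type*} [NormedAddCommGroup X] [NormedSpace ℂ X] [CompleteSpace X]
    (ω M : ℝ) (hM : 0 < M) (f : ℝ → X)
    (hloc : LocallyIntegrableOn f (Ici 0) volume)
    (hb : ∀ᵐ t ∂(volume.restrict (Ici (0 : ℝ))), ‖f t‖ ≤ M * Real.exp (ω * t))
    (F : ℝ → X)
    (hF : ∀ l : ℝ, ω < l → F l = ∫ t in Ioi (0 : ℝ), Real.exp (-l * t) • f t) :
    ContDiffOn ℝ (⊤ : ℕ∞) F (Ioi ω) ∧
    (∀ (v : ℕ) (l : ℝ), ω < l →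
      iteratedDeriv v F l = ∫ t in Ioi (0 : ℝ), (Real.exp (-l * t) * (-t) ^ v) • f t) ∧
    (∀ (v : ℕ) (l : ℝ), ω < l →
      ‖iteratedDeriv v F l‖ ≤ M * (Nat.factorial v : ℝ) / (l - ω) ^ (v + 1)) := by
  have hmeasf : AEStronglyMeasurable f (volume.restrict (Ioi (0:ℝ))) :=
    hloc.aestronglyMeasurable.mono_measure (Measure.restrict_mono Ioi_subset_Ici_self le_rfl)
  have hb' : ∀ᵐ t ∂(volume.restrict (Ioi (0:ℝ))), ‖f t‖ ≤ M * Real.exp (ω * t) :=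
    hb.filter_mono (ae_mono (Measure.restrict_mono Ioi_subset_Ici_self le_rfl))
  -- the candidate derivatives
  set G : ℕ → ℝ → X := fun v l => ∫ t in Ioi (0:ℝ), (Real.exp (-l * t) * (-t) ^ v) • f t
    with hG
  -- integrability of the integrands
  have hint : ∀ (v : ℕ) (l : ℝ), ω < l →
      IntegrableOn (fun t => (Real.exp (-l * t) * (-t) ^ v) • f t) (Ioi 0) := by
    intro v l hl
    refine Integrable.mono' ((aux_integrableOn_pow_mul_exp v (δ := l - ω) (by linarith)).const_mul M)
      (((Real.continuous_exp.comp (by fun_prop)).mul (by fun_prop)).aestronglyMeasurable.smul hmeasf) ?_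
    filter_upwards [hb', self_mem_ae_restrict measurableSet_Ioi] with t hbt ht
    rw [norm_smul, Real.norm_eq_abs, abs_mul, Real.abs_exp, abs_pow, abs_neg,
      abs_of_pos (mem_Ioi.mp ht)]
    calc Real.exp (-l * t) * t ^ v * ‖f t‖
        ≤ Real.exp (-l * t) * t ^ v * (M * Real.exp (ω * t)) := by
          exact mul_le_mul_of_nonneg_left hbt
            (mul_nonneg (Real.exp_nonneg _) (pow_nonneg (le_of_lt (mem_Ioi.mp ht)) v))
      _ = M * (t ^ v * Real.exp (-(l - ω) * t)) := by
          rw [show -(l - ω) * t = -l * t + ω * t by ring, Real.exp_add]; ring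
  -- the real-differentiation step
  have hder : ∀ (v : ℕ) (l : ℝ), ω < l → HasDerivAt (G v) (G (v+1) l) l := by
    intro v l hl
    have hε0 : 0 < (l - ω) / 2 := by linarith
    have key := hasDerivAt_integral_of_dominated_loc_of_deriv_le
      (μ := volume.restrict (Ioi (0:ℝ)))
      (F := fun (x : ℝ) t => (Real.exp (-x * t) * (-t) ^ v) • f t)
      (F' := fun (x : ℝ) t => (Real.exp (-x * t) * (-t) ^ (v+1)) • f t)
      (bound := fun t => M * (t ^ (v+1) * Real.exp (-((l - ω)/2) * t)))
      (ball_mem_nhds l hε0)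
      (Eventually.of_forall fun x =>
        ((Real.continuous_exp.comp (by fun_prop)).mul (by fun_prop)).aestronglyMeasurable.smul hmeasf)
      (hint v l hl)
      (((Real.continuous_exp.comp (by fun_prop)).mul (by fun_prop)).aestronglyMeasurable.smul hmeasf)
      ?_ ((aux_integrableOn_pow_mul_exp (v+1) hε0).const_mul M) ?_
    · exact key.2
    · filter_upwards [hb', self_mem_ae_restrict measurableSet_Ioi] with t hbt ht x hx
      have ht0 : (0:ℝ) < t := mem_Ioi.mp ht
      have hx' : ω + (l - ω)/2 < x := by
        have := abs_lt.mp (by simpa [Real.dist_eq] using (mem_ball.mp hx))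
        linarith [this.1]
      rw [norm_smul, Real.norm_eq_abs, abs_mul, Real.abs_exp, abs_pow, abs_neg, abs_of_pos ht0]
      calc Real.exp (-x * t) * t ^ (v+1) * ‖f t‖
          ≤ Real.exp (-x * t) * t ^ (v+1) * (M * Real.exp (ω * t)) := by
            exact mul_le_mul_of_nonneg_left hbt
              (mul_nonneg (Real.exp_nonneg _) (pow_nonneg ht0.le _))
        _ = M * (t ^ (v+1) * Real.exp ((ω - x) * t)) := by
            rw [show (ω - x) * t = -x * t + ω * t by ring, Real.exp_add]; ring
        _ ≤ M * (t ^ (v+1) * Real.exp (-((l - ω)/2) * t)) := by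
            gcongr
            linarith
    · refine Eventually.of_forall fun t => fun x _ => ?_
      have h1 : HasDerivAt (fun x : ℝ => -x * t) (-t) x := by
        simpa using ((hasDerivAt_id x).neg.mul_const t)
      have h2 := (h1.exp).mul_const ((-t) ^ v)
      have h3 : HasDerivAt (fun x : ℝ => Real.exp (-x * t) * (-t) ^ v)
          (Real.exp (-x * t) * (-t) ^ (v+1)) x := by
        exact h2.congr_deriv (by rw [pow_succ]; ring)
      exact h3.smul_const (f t)
  -- identification of the iterated derivatives
  have hFG : ∀ l : ℝ, ω < l → F l = G 0 l := by
    intro l hl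
    rw [hF l hl, hG]
    exact setIntegral_congr_fun measurableSet_Ioi fun t ht => by norm_num
  have hGiter : ∀ (v : ℕ) (l : ℝ), ω < l → iteratedDeriv v F l = G v l := by
    intro v
    induction v with
    | zero =>
      intro l hl
      rw [iteratedDeriv_zero]
      exact hFG l hl
    | succ v ih =>
      intro l hl
      rw [iteratedDeriv_succ]
      have hev : iteratedDeriv v F =ᶠ[nhds l] G v := by
        filter_upwards [isOpen_Ioi.mem_nhds hl] with x hx using ih x hx
      rw [hev.deriv_eq, (hder v l hl).deriv]
  -- Widder estimates
  have hbound : ∀ (v : ℕ) (l : ℝ), ω < l →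
      ‖G v l‖ ≤ M * (Nat.factorial v : ℝ) / (l - ω) ^ (v + 1) := by
    intro v l hl
    have hδ : (0:ℝ) < l - ω := by linarith
    have h1 : ‖G v l‖ ≤ ∫ t in Ioi (0:ℝ), M * (t ^ v * Real.exp (-(l - ω) * t)) := by
      refine norm_integral_le_of_norm_le ((aux_integrableOn_pow_mul_exp v hδ).const_mul M) ?_
      filter_upwards [hb', self_mem_ae_restrict measurableSet_Ioi] with t hbt ht
      rw [norm_smul, Real.norm_eq_abs, abs_mul, Real.abs_exp, abs_pow, abs_neg,
        abs_of_pos (mem_Ioi.mp ht)]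
      calc Real.exp (-l * t) * t ^ v * ‖f t‖
          ≤ Real.exp (-l * t) * t ^ v * (M * Real.exp (ω * t)) := by
            exact mul_le_mul_of_nonneg_left hbt
              (mul_nonneg (Real.exp_nonneg _) (pow_nonneg (le_of_lt (mem_Ioi.mp ht)) v))
        _ = M * (t ^ v * Real.exp (-(l - ω) * t)) := by
            rw [show -(l - ω) * t = -l * t + ω * t by ring, Real.exp_add]; ring
    calc ‖G v l‖ ≤ ∫ t in Ioi (0:ℝ), M * (t ^ v * Real.exp (-(l - ω) * t)) := h1
      _ = M * ∫ t in Ioi (0:ℝ), t ^ v * Real.exp (-(l - ω) * t) := MeasureTheory.integral_const_mul M _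
      _ = M * (Nat.factorial v : ℝ) / (l - ω) ^ (v + 1) := by
          rw [aux_integral_pow_mul_exp v hδ, mul_div_assoc]
  -- smoothness, via complex analyticity
  have hsmooth : ContDiffOn ℝ (⊤ : ℕ∞) F (Ioi ω) := by
    set Fc : ℂ → X := fun z => ∫ t in Ioi (0:ℝ), Complex.exp (-z * t) • f t with hFc
    have hnorm : ∀ (z : ℂ) (t : ℝ), ‖Complex.exp (-z * t)‖ = Real.exp (-z.re * t) := by
      intro z t
      rw [Complex.norm_exp]
      congr 1
      simp [Complex.mul_re]
    have hintC : ∀ z : ℂ, ω < z.re →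
        IntegrableOn (fun t : ℝ => Complex.exp (-z * t) • f t) (Ioi 0) := by
      intro z hz
      refine Integrable.mono' (((aux_integrableOn_pow_mul_exp 0 (δ := z.re - ω)
        (by linarith)).const_mul M))
        ((Complex.continuous_exp.comp (by fun_prop)).aestronglyMeasurable.smul hmeasf) ?_
      filter_upwards [hb', self_mem_ae_restrict measurableSet_Ioi] with t hbt ht
      rw [norm_smul, hnorm]
      calc Real.exp (-z.re * t) * ‖f t‖
          ≤ Real.exp (-z.re * t) * (M * Real.exp (ω * t)) :=
            mul_le_mul_of_nonneg_left hbt (Real.exp_nonneg _)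
        _ = M * (t ^ 0 * Real.exp (-(z.re - ω) * t)) := by
            rw [show -(z.re - ω) * t = -z.re * t + ω * t by ring, Real.exp_add]; ring
    have hFcder : ∀ z : ℂ, ω < z.re → HasDerivAt Fc
        (∫ t in Ioi (0:ℝ), (Complex.exp (-z * t) * (-t)) • f t) z := by
      intro z hz
      have hε0 : 0 < (z.re - ω) / 2 := by linarith
      have key := hasDerivAt_integral_of_dominated_loc_of_deriv_le
        (μ := volume.restrict (Ioi (0:ℝ)))
        (F := fun (x : ℂ) t => Complex.exp (-x * t) • f t)
        (F' := fun (x : ℂ) t => (Complex.exp (-x * t) * (-t)) • f t)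
        (bound := fun t => M * (t ^ 1 * Real.exp (-((z.re - ω)/2) * t)))
        (ball_mem_nhds z hε0)
        (Eventually.of_forall fun x =>
          (Complex.continuous_exp.comp (by fun_prop)).aestronglyMeasurable.smul hmeasf)
        (hintC z hz)
        (((Complex.continuous_exp.comp (by fun_prop)).mul (by fun_prop)).aestronglyMeasurable.smul hmeasf)
        ?_ ((aux_integrableOn_pow_mul_exp 1 hε0).const_mul M) ?_
      · exact key.2
      · filter_upwards [hb', self_mem_ae_restrict measurableSet_Ioi] with t hbt ht x hx
        have ht0 : (0:ℝ) < t := mem_Ioi.mp ht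
        have hx' : ω + (z.re - ω)/2 < x.re := by
          have h1 : |(x - z).re| ≤ ‖x - z‖ := Complex.abs_re_le_norm _
          have h2 : ‖x - z‖ < (z.re - ω)/2 := by
            simpa [Complex.dist_eq] using (mem_ball.mp hx)
          have := abs_lt.mp (lt_of_le_of_lt h1 h2)
          simp only [Complex.sub_re] at this
          linarith [this.1]
        rw [norm_smul, norm_mul, hnorm, norm_neg, Complex.norm_real, Real.norm_eq_abs,
          abs_of_pos ht0]
        calc Real.exp (-x.re * t) * t * ‖f t‖
            ≤ Real.exp (-x.re * t) * t * (M * Real.exp (ω * t)) := by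
              exact mul_le_mul_of_nonneg_left hbt
                (mul_nonneg (Real.exp_nonneg _) ht0.le)
          _ = M * (t ^ 1 * Real.exp ((ω - x.re) * t)) := by
              rw [show (ω - x.re) * t = -x.re * t + ω * t by ring, Real.exp_add]; ring
          _ ≤ M * (t ^ 1 * Real.exp (-((z.re - ω)/2) * t)) := by
              gcongr
              linarith
      · refine Eventually.of_forall fun t => fun x _ => ?_
        have h1 : HasDerivAt (fun x : ℂ => -x * (t:ℂ)) (-(t:ℂ)) x := by
          simpa using ((hasDerivAt_id x).neg.mul_const (t:ℂ))
        exact (h1.cexp).smul_const (f t)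
    have hUopen : IsOpen {z : ℂ | ω < z.re} := isOpen_lt continuous_const Complex.continuous_re
    have hFcan : AnalyticOnNhd ℂ Fc {z : ℂ | ω < z.re} :=
      DifferentiableOn.analyticOnNhd
        (fun z hz => ((hFcder z hz).differentiableAt).differentiableWithinAt) hUopen
    have hcomp : AnalyticOnNhd ℝ (fun l : ℝ => Fc l) (Ioi ω) :=
      (hFcan.restrictScalars).comp ((Complex.ofRealCLM).analyticOnNhd _)
        (fun l hl => by simpa using (mem_Ioi.mp hl))
    have hFeq : EqOn (fun l : ℝ => Fc l) F (Ioi ω) := by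
      intro l hl
      rw [hF l (mem_Ioi.mp hl)]
      refine setIntegral_congr_fun measurableSet_Ioi fun t ht => ?_
      have : (-(l:ℂ) * (t:ℂ)) = ((-l * t : ℝ) : ℂ) := by push_cast; ring
      simp only [this, ← Complex.ofReal_exp, Complex.coe_smul]
    exact ((hcomp.congr isOpen_Ioi hFeq).contDiffOn isOpen_Ioi.uniqueDiffOn)
  exact ⟨hsmooth, fun v l hl => hGiter v l hl,
    fun v l hl => (hGiter v l hl).symm ▸ hbound v l hl⟩
end

section
/- Let X be a complex Banach space, ω a real number, M > 0, and let F : (ω,∞) → ℝ → X be given on (ω,∞). Suppose there exists f ∈ L¹_loc([0,∞); X) with ‖f(t)‖ ≤ M·e^{ωt} almost everywhere and F(λ) = ∫₀^∞ e^{−λt} f(t) dt for λ > ω. Then F admits an analytic extension to the half-plane {z ∈ ℂ : Re z > ω}, this extension satisfies F⁽ᵛ⁾(z) = ∫₀^∞ e^{−zt}(−t)^v f(t) dt and ‖F⁽ᵛ⁾(z)‖ ≤ M·v!/(Re z − ω)^{v+1} for all z with Re z > ω and all v ∈ ℕ. -/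
/-!
The extension is `G z = ∫₀^∞ e^{-zt} f(t) dt`. On the ball of radius `δ = (Re z - ω)/2` around `z`,
the `t`-derivatives `e^{-wt} (-t)^v f(t)` are dominated by `M t^v e^{-δt}`, so one may
differentiate under the integral sign arbitrarily often. The estimate comes from
`‖e^{-zt} (-t)^v f(t)‖ ≤ M t^v e^{-(Re z - ω)t}` and `∫₀^∞ t^v e^{-rt} dt = v!/r^{v+1}`.
-/

open MeasureTheory Set

lemma Real.integrableOn_pow_mul_exp_neg_mul_Ioi (v : ℕ) {r : ℝ} (hr : 0 < r) :
    IntegrableOn (fun t : ℝ => t ^ v * Real.exp (-(r * t))) (Ioi 0) := by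
  have hv : (-1 : ℝ) < v := by linarith [v.cast_nonneg (α := ℝ)]
  refine (integrableOn_rpow_mul_exp_neg_mul_rpow (p := 1) hv one_pos hr).congr_fun
    (fun t _ => ?_) measurableSet_Ioi
  simp only [Real.rpow_one, Real.rpow_natCast, neg_mul]

lemma Real.integral_pow_mul_exp_neg_mul_Ioi (v : ℕ) {r : ℝ} (hr : 0 < r) :
    ∫ t in Ioi (0 : ℝ), t ^ v * Real.exp (-(r * t)) = v.factorial / r ^ (v + 1) := by
  have h := Real.integral_rpow_mul_exp_neg_mul_Ioi (a := v + 1) (by positivity) hr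
  simp only [add_sub_cancel_right, Real.rpow_natCast] at h
  rw [h, Real.Gamma_nat_eq_factorial, ← Nat.cast_add_one, Real.rpow_natCast, one_div, inv_pow,
    inv_mul_eq_div]

lemma iteratedDeriv_eq_of_hasDerivAt_succ {𝕜 E : Type*} [NontriviallyNormedField 𝕜]
    [NormedAddCommGroup E] [NormedSpace 𝕜 E] {s : Set 𝕜} (hs : IsOpen s) {g : ℕ → 𝕜 → E}
    (hg : ∀ n, ∀ z ∈ s, HasDerivAt (g n) (g (n + 1) z) z) (n : ℕ) :
    ∀ z ∈ s, iteratedDeriv n (g 0) z = g n z := by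
  induction n with
  | zero => simp
  | succ n ih =>
    intro z hz
    have hev : iteratedDeriv n (g 0) =ᶠ[nhds z] g n :=
      Filter.eventuallyEq_of_mem (hs.mem_nhds hz) ih
    rw [iteratedDeriv_succ, hev.deriv_eq, (hg n z hz).deriv]

section Laplace

variable {X : Type*} [NormedAddCommGroup X] [NormedSpace ℂ X]

noncomputable def laplaceIntegrand (f : ℝ → X) (v : ℕ) (z : ℂ) (t : ℝ) : X :=
  (Complex.exp (-z * t) * (-(t : ℂ)) ^ v) • f t

noncomputable def laplaceMoment (f : ℝ → X) (v : ℕ) (z : ℂ) : X :=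
  ∫ t in Ioi (0 : ℝ), laplaceIntegrand f v z t

lemma laplaceMoment_zero_ofReal (f : ℝ → X) (l : ℝ) :
    laplaceMoment f 0 l = ∫ t in Ioi (0 : ℝ), Real.exp (-l * t) • f t := by
  refine setIntegral_congr_fun measurableSet_Ioi fun t _ => ?_
  rw [laplaceIntegrand, pow_zero, mul_one, ← Complex.ofReal_neg, ← Complex.ofReal_mul,
    ← Complex.ofReal_exp, Complex.coe_smul]

lemma hasDerivAt_laplaceIntegrand (f : ℝ → X) (v : ℕ) (z : ℂ) (t : ℝ) :
    HasDerivAt (fun w => laplaceIntegrand f v w t) (laplaceIntegrand f (v + 1) z t) z := by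
  have hexp : HasDerivAt (fun w : ℂ => Complex.exp (-w * t)) (Complex.exp (-z * t) * -t) z := by
    simpa using ((hasDerivAt_id z).neg.mul_const (t : ℂ)).cexp
  unfold laplaceIntegrand
  convert (hexp.mul_const ((-(t : ℂ)) ^ v)).smul_const (f t) using 2
  ring

lemma norm_laplaceIntegrand_le {f : ℝ → X} {ω M t : ℝ} (ht : 0 ≤ t)
    (hf : ‖f t‖ ≤ M * Real.exp (ω * t)) (v : ℕ) (z : ℂ) :
    ‖laplaceIntegrand f v z t‖ ≤ M * (t ^ v * Real.exp (-((z.re - ω) * t))) := by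
  have hnorm : ‖laplaceIntegrand f v z t‖ = Real.exp (-(z.re * t)) * t ^ v * ‖f t‖ := by
    simp [laplaceIntegrand, norm_smul, Complex.norm_exp, abs_of_nonneg ht]
  calc ‖laplaceIntegrand f v z t‖
      ≤ Real.exp (-(z.re * t)) * t ^ v * (M * Real.exp (ω * t)) := by
        rw [hnorm]; gcongr
    _ = M * (t ^ v * Real.exp (-((z.re - ω) * t))) := by
        rw [show -((z.re - ω) * t) = -(z.re * t) + ω * t by ring, Real.exp_add]; ring

lemma MeasureTheory.AEStronglyMeasurable.laplaceIntegrand {μ : Measure ℝ} {f : ℝ → X}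
    (hf : AEStronglyMeasurable f μ) (v : ℕ) (z : ℂ) :
    AEStronglyMeasurable (laplaceIntegrand f v z) μ :=
  (Continuous.aestronglyMeasurable (by fun_prop)).smul hf

variable {f : ℝ → X} {ω M : ℝ}
  (hf : AEStronglyMeasurable f (volume.restrict (Ioi 0)))
  (hb : ∀ᵐ t ∂(volume.restrict (Ioi (0 : ℝ))), ‖f t‖ ≤ M * Real.exp (ω * t))
include hb

lemma ae_norm_laplaceIntegrand_le :
    ∀ᵐ t ∂(volume.restrict (Ioi (0 : ℝ))), ∀ v z,
      ‖laplaceIntegrand f v z t‖ ≤ M * (t ^ v * Real.exp (-((z.re - ω) * t))) := by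
  filter_upwards [hb, ae_restrict_mem measurableSet_Ioi] with t hft ht v z
  exact norm_laplaceIntegrand_le (le_of_lt ht) hft v z

include hf in
lemma integrableOn_laplaceIntegrand (v : ℕ) {z : ℂ} (hz : ω < z.re) :
    IntegrableOn (laplaceIntegrand f v z) (Ioi 0) :=
  (((Real.integrableOn_pow_mul_exp_neg_mul_Ioi v (sub_pos.mpr hz)).const_mul M).mono'
    (hf.laplaceIntegrand v z)) <| (ae_norm_laplaceIntegrand_le hb).mono fun _ h => h v z

lemma norm_laplaceMoment_le (v : ℕ) {z : ℂ} (hz : ω < z.re) :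
    ‖laplaceMoment f v z‖ ≤ M * v.factorial / (z.re - ω) ^ (v + 1) := by
  have hr : 0 < z.re - ω := sub_pos.mpr hz
  calc ‖laplaceMoment f v z‖
      ≤ ∫ t in Ioi (0 : ℝ), M * (t ^ v * Real.exp (-((z.re - ω) * t))) :=
        norm_integral_le_of_norm_le ((Real.integrableOn_pow_mul_exp_neg_mul_Ioi v hr).const_mul M)
          ((ae_norm_laplaceIntegrand_le hb).mono fun _ h => h v z)
    _ = M * v.factorial / (z.re - ω) ^ (v + 1) := by
        rw [integral_const_mul, Real.integral_pow_mul_exp_neg_mul_Ioi v hr, mul_div_assoc]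

include hf in
lemma hasDerivAt_laplaceMoment (hM : 0 ≤ M) (v : ℕ) {z : ℂ} (hz : ω < z.re) :
    HasDerivAt (laplaceMoment f v) (laplaceMoment f (v + 1) z) z := by
  set δ := (z.re - ω) / 2
  have hδ : 0 < δ := half_pos (sub_pos.mpr hz)
  have hball : ∀ w ∈ Metric.ball z δ, δ ≤ w.re - ω := fun w hw => by
    have hre := (Complex.abs_re_le_norm (w - z)).trans (mem_ball_iff_norm.mp hw).le
    rw [Complex.sub_re, abs_le] at hre
    simp only [δ] at hre ⊢
    linarith [hre.1]
  refine (hasDerivAt_integral_of_dominated_loc_of_deriv_le (Metric.ball_mem_nhds z hδ)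
    (.of_forall fun w => hf.laplaceIntegrand v w) (integrableOn_laplaceIntegrand hf hb v hz)
    (hf.laplaceIntegrand (v + 1) z) ?_
    ((Real.integrableOn_pow_mul_exp_neg_mul_Ioi (v + 1) hδ).const_mul M)
    (.of_forall fun t w _ => hasDerivAt_laplaceIntegrand f v w t)).2
  filter_upwards [ae_norm_laplaceIntegrand_le hb, ae_restrict_mem measurableSet_Ioi]
    with t hbound ht w hw
  refine (hbound (v + 1) w).trans ?_
  have hδw := hball w hw
  have ht₀ : 0 ≤ t := le_of_lt ht
  gcongr

include hf in
lemma iteratedDeriv_laplaceMoment (hM : 0 ≤ M) (v : ℕ) {z : ℂ} (hz : ω < z.re) :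
    iteratedDeriv v (laplaceMoment f 0) z = laplaceMoment f v z :=
  iteratedDeriv_eq_of_hasDerivAt_succ (isOpen_lt continuous_const Complex.continuous_re)
    (fun n _ hw => hasDerivAt_laplaceMoment hf hb hM n hw) v z hz

end Laplace

theorem stmt_9_general {X : Type*} [NormedAddCommGroup X] [NormedSpace ℂ X]
    (ω M : ℝ) (hM : 0 < M) (F : ℝ → X) (f : ℝ → X)
    (hloc : LocallyIntegrableOn f (Ici 0) volume)
    (hb : ∀ᵐ t ∂(volume.restrict (Ici (0 : ℝ))), ‖f t‖ ≤ M * Real.exp (ω * t))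
    (hrep : ∀ l : ℝ, ω < l → F l = ∫ t in Ioi (0 : ℝ), Real.exp (-l * t) • f t) :
    ∃ G : ℂ → X,
      (∀ l : ℝ, ω < l → G (l : ℂ) = F l) ∧
      DifferentiableOn ℂ G {z : ℂ | ω < z.re} ∧
      (∀ (v : ℕ) (z : ℂ), ω < z.re →
        iteratedDeriv v G z
          = ∫ t in Ioi (0 : ℝ), (Complex.exp (-z * (t : ℂ)) * (-(t : ℂ)) ^ v) • f t) ∧
      (∀ (v : ℕ) (z : ℂ), ω < z.re →
        ‖iteratedDeriv v G z‖ ≤ M * (Nat.factorial v : ℝ) / (z.re - ω) ^ (v + 1)) := by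
  have hf : AEStronglyMeasurable f (volume.restrict (Ioi 0)) :=
    hloc.aestronglyMeasurable.mono_measure (Measure.restrict_mono Ioi_subset_Ici_self le_rfl)
  have hb' := ae_restrict_of_ae_restrict_of_subset Ioi_subset_Ici_self hb
  refine ⟨laplaceMoment f 0, fun l hl => (laplaceMoment_zero_ofReal f l).trans (hrep l hl).symm,
    fun z hz => (hasDerivAt_laplaceMoment hf hb' hM.le 0 hz).differentiableAt.differentiableWithinAt,
    fun v z hz => iteratedDeriv_laplaceMoment hf hb' hM.le v hz, fun v z hz => ?_⟩
  rw [iteratedDeriv_laplaceMoment hf hb' hM.le v hz]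
  exact norm_laplaceMoment_le hb' v hz

/-- If `F : (ω,∞) → X` is the Laplace transform of a locally Bochner
integrable `f` with `‖f(t)‖ ≤ M e^{ωt}` a.e., then `F` extends analytically to the
half-plane `{Re z > ω}` and the extension satisfies
`F⁽ᵛ⁾(z) = ∫₀^∞ e^{-zt}(-t)^v f(t) dt` and the Widder-type estimates there. -/
theorem stmt_9 {X : Type*} [NormedAddCommGroup X] [NormedSpace ℂ X] [CompleteSpace X]
    (ω M : ℝ) (hM : 0 < M) (F : ℝ → X) (f : ℝ → X)
    (hloc : LocallyIntegrableOn f (Ici 0) volume)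
    (hb : ∀ᵐ t ∂(volume.restrict (Ici (0 : ℝ))), ‖f t‖ ≤ M * Real.exp (ω * t))
    (hrep : ∀ l : ℝ, ω < l → F l = ∫ t in Ioi (0 : ℝ), Real.exp (-l * t) • f t) :
    ∃ G : ℂ → X,
      (∀ l : ℝ, ω < l → G (l : ℂ) = F l) ∧
      DifferentiableOn ℂ G {z : ℂ | ω < z.re} ∧
      (∀ (v : ℕ) (z : ℂ), ω < z.re →
        iteratedDeriv v G z
          = ∫ t in Ioi (0 : ℝ), (Complex.exp (-z * (t : ℂ)) * (-(t : ℂ)) ^ v) • f t) ∧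
      (∀ (v : ℕ) (z : ℂ), ω < z.re →
        ‖iteratedDeriv v G z‖ ≤ M * (Nat.factorial v : ℝ) / (z.re - ω) ^ (v + 1)) :=
  stmt_9_general ω M hM F f hloc hb hrep
end
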